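/- arXiv:1912.06614 — 5 statements merged into one kernel-verified Lean document; each statement's English description precedes it below -/
import Mathlib

section
/- The families φ₁₀(x)=2, φ₁ᵢ(x)=4(1−x)sin(2πi x), φ₂ᵢ(x)=4cos(2πi x) and ψ₁₀(x)=x, ψ₁ᵢ(x)=sin(2πi x), ψ₂ᵢ(x)=x cos(2πi x) form a bi-orthogonal system on L²(0,1): ⟨φ₁₀,ψ₁₀⟩=1, ⟨φ₁ᵢ,ψ₁ⱼ⟩=δᵢⱼ, ⟨φ₂ᵢ,ψ₂ⱼ⟩=δᵢⱼ, and all cross inner products ⟨φ₁₀,ψₖᵢ⟩, ⟨φₖᵢ,ψ₁₀⟩, ⟨φ₁ᵢ,ψ₂ⱼ⟩, ⟨φ₂ᵢ,ψ₁ⱼ⟩ vanish for i,j ≥ 1. -/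
/-!
Everything follows from the reflection `x ↦ 1 - x` of `[0, 1]`, under which
`sin (2πnx)` is odd and `cos (2πnx)` is even. Four of the cross products `φ ψ` are odd, so their
integrals vanish. In the other cases the weights `x` and `1 - x` add up to `1`, so averaging a
product with its reflection leaves a pure trigonometric product, and the claims reduce to the
orthogonality of `cos (2πix)` and `sin (2πix)` on `[0, 1]`.
-/

open Real intervalIntegral

/-- The L²(0,1) inner product. -/
noncomputable def ip (f g : ℝ → ℝ) : ℝ := ∫ x in (0:ℝ)..1, f x * g x

noncomputable def φ₁₀ : ℝ → ℝ := fun _ => 2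
noncomputable def φ₁ (i : ℕ) : ℝ → ℝ := fun x => 4 * (1 - x) * Real.sin (2 * π * i * x)
noncomputable def φ₂ (i : ℕ) : ℝ → ℝ := fun x => 4 * Real.cos (2 * π * i * x)
noncomputable def ψ₁₀ : ℝ → ℝ := fun x => x
noncomputable def ψ₁ (i : ℕ) : ℝ → ℝ := fun x => Real.sin (2 * π * i * x)
noncomputable def ψ₂ (i : ℕ) : ℝ → ℝ := fun x => x * Real.cos (2 * π * i * x)

lemma sin_two_pi_nat_mul_one_sub (n : ℕ) (x : ℝ) :
    sin (2 * π * n * (1 - x)) = -sin (2 * π * n * x) := by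
  rw [← sin_nat_mul_two_pi_sub _ n]; ring_nf

lemma cos_two_pi_nat_mul_one_sub (n : ℕ) (x : ℝ) :
    cos (2 * π * n * (1 - x)) = cos (2 * π * n * x) := by
  rw [← cos_nat_mul_two_pi_sub _ n]; ring_nf

lemma integral_cos_two_pi_int_mul (m : ℤ) :
    ∫ x in (0:ℝ)..1, cos (2 * π * m * x) = if m = 0 then 1 else 0 := by
  split_ifs with hm
  · simp [hm]
  · have hm' : (m : ℝ) ≠ 0 := by exact_mod_cast hm
    have hc : 2 * π * m ≠ 0 := by positivity
    rw [integral_comp_mul_left (fun x => cos x) hc, integral_cos, mul_one, mul_zero, sin_zero,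
      show 2 * π * m = (2 * m : ℤ) * π by push_cast; ring, sin_int_mul_pi]
    simp

lemma integral_cos_two_pi_nat_mul {n : ℕ} (hn : n ≠ 0) :
    ∫ x in (0:ℝ)..1, cos (2 * π * n * x) = 0 := by
  simpa [hn] using integral_cos_two_pi_int_mul n

lemma cos_two_pi_nat_mul_mul_cos (i j : ℕ) (x : ℝ) :
    cos (2 * π * i * x) * cos (2 * π * j * x) =
      (cos (2 * π * ((i - j : ℤ) : ℝ) * x) + cos (2 * π * ((i + j : ℤ) : ℝ) * x)) / 2 := by
  push_cast
  rw [show 2 * π * (i - j : ℝ) * x = 2 * π * i * x - 2 * π * j * x by ring,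
    show 2 * π * (i + j : ℝ) * x = 2 * π * i * x + 2 * π * j * x by ring, cos_sub, cos_add]
  ring

lemma sin_two_pi_nat_mul_mul_sin (i j : ℕ) (x : ℝ) :
    sin (2 * π * i * x) * sin (2 * π * j * x) =
      (cos (2 * π * ((i - j : ℤ) : ℝ) * x) - cos (2 * π * ((i + j : ℤ) : ℝ) * x)) / 2 := by
  push_cast
  rw [show 2 * π * (i - j : ℝ) * x = 2 * π * i * x - 2 * π * j * x by ring,
    show 2 * π * (i + j : ℝ) * x = 2 * π * i * x + 2 * π * j * x by ring, cos_sub, cos_add]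
  ring

lemma integral_cos_two_pi_nat_mul_mul_cos {i j : ℕ} (h : i + j ≠ 0) :
    ∫ x in (0:ℝ)..1, cos (2 * π * i * x) * cos (2 * π * j * x) = if i = j then 1 / 2 else 0 := by
  simp_rw [cos_two_pi_nat_mul_mul_cos]
  rw [integral_div, integral_add (by apply Continuous.intervalIntegrable; fun_prop)
    (by apply Continuous.intervalIntegrable; fun_prop), integral_cos_two_pi_int_mul,
    integral_cos_two_pi_int_mul, if_neg (show (i + j : ℤ) ≠ 0 by omega)]
  simp only [sub_eq_zero, Nat.cast_inj]
  split_ifs <;> norm_num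

lemma integral_sin_two_pi_nat_mul_mul_sin {i j : ℕ} (h : i + j ≠ 0) :
    ∫ x in (0:ℝ)..1, sin (2 * π * i * x) * sin (2 * π * j * x) = if i = j then 1 / 2 else 0 := by
  simp_rw [sin_two_pi_nat_mul_mul_sin]
  rw [integral_div, integral_sub (by apply Continuous.intervalIntegrable; fun_prop)
    (by apply Continuous.intervalIntegrable; fun_prop), integral_cos_two_pi_int_mul,
    integral_cos_two_pi_int_mul, if_neg (show (i + j : ℤ) ≠ 0 by omega)]
  simp only [sub_eq_zero, Nat.cast_inj]
  split_ifs <;> norm_num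

lemma integral_comp_one_sub (f : ℝ → ℝ) : ∫ x in (0:ℝ)..1, f (1 - x) = ∫ x in (0:ℝ)..1, f x := by
  simp [integral_comp_sub_left]

lemma ip_eq_zero_of_comp_one_sub {f g : ℝ → ℝ} (h : ∀ x, f (1 - x) * g (1 - x) = -(f x * g x)) :
    ip f g = 0 := by
  have hrefl := integral_comp_one_sub fun x => f x * g x
  simp only [h, integral_neg] at hrefl
  rw [ip]; linarith

lemma ip_eq_half_integral_of_add_comp_one_sub {f g s : ℝ → ℝ}
    (hfg : IntervalIntegrable (fun x => f x * g x) MeasureTheory.volume 0 1)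
    (hs : ∀ x, f x * g x + f (1 - x) * g (1 - x) = s x) :
    ip f g = (∫ x in (0:ℝ)..1, s x) / 2 := by
  have hrefl := integral_comp_one_sub fun x => f x * g x
  rw [ip, ← funext hs, integral_add hfg, hrefl]
  · ring
  · simpa using (hfg.comp_sub_left 1).symm

lemma ip_φ₁₀_ψ₁₀ : ip φ₁₀ ψ₁₀ = 1 := by
  simp only [ip, φ₁₀, ψ₁₀]
  rw [integral_const_mul, integral_id]
  norm_num

lemma ip_φ₁_ψ₁ {i j : ℕ} (h : i + j ≠ 0) : ip (φ₁ i) (ψ₁ j) = if i = j then 1 else 0 := by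
  have hsym : ∀ x, φ₁ i x * ψ₁ j x + φ₁ i (1 - x) * ψ₁ j (1 - x) =
      4 * (sin (2 * π * i * x) * sin (2 * π * j * x)) := fun x => by
    simp only [φ₁, ψ₁, sin_two_pi_nat_mul_one_sub]; ring
  rw [ip_eq_half_integral_of_add_comp_one_sub
    (Continuous.intervalIntegrable (by unfold φ₁ ψ₁; fun_prop) _ _) hsym,
    integral_const_mul, integral_sin_two_pi_nat_mul_mul_sin h]
  split_ifs <;> norm_num

lemma ip_φ₂_ψ₂ {i j : ℕ} (h : i + j ≠ 0) : ip (φ₂ i) (ψ₂ j) = if i = j then 1 else 0 := by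
  have hsym : ∀ x, φ₂ i x * ψ₂ j x + φ₂ i (1 - x) * ψ₂ j (1 - x) =
      4 * (cos (2 * π * i * x) * cos (2 * π * j * x)) := fun x => by
    simp only [φ₂, ψ₂, cos_two_pi_nat_mul_one_sub]; ring
  rw [ip_eq_half_integral_of_add_comp_one_sub
    (Continuous.intervalIntegrable (by unfold φ₂ ψ₂; fun_prop) _ _) hsym,
    integral_const_mul, integral_cos_two_pi_nat_mul_mul_cos h]
  split_ifs <;> norm_num

lemma ip_φ₁₀_ψ₂ {i : ℕ} (hi : i ≠ 0) : ip φ₁₀ (ψ₂ i) = 0 := by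
  have hsym : ∀ x, φ₁₀ x * ψ₂ i x + φ₁₀ (1 - x) * ψ₂ i (1 - x) = 2 * cos (2 * π * i * x) :=
    fun x => by simp only [φ₁₀, ψ₂, cos_two_pi_nat_mul_one_sub]; ring
  rw [ip_eq_half_integral_of_add_comp_one_sub
    (Continuous.intervalIntegrable (by unfold φ₁₀ ψ₂; fun_prop) _ _) hsym,
    integral_const_mul, integral_cos_two_pi_nat_mul hi]
  simp

lemma ip_φ₂_ψ₁₀ {i : ℕ} (hi : i ≠ 0) : ip (φ₂ i) ψ₁₀ = 0 := by
  have hsym : ∀ x, φ₂ i x * ψ₁₀ x + φ₂ i (1 - x) * ψ₁₀ (1 - x) = 4 * cos (2 * π * i * x) :=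
    fun x => by simp only [φ₂, ψ₁₀, cos_two_pi_nat_mul_one_sub]; ring
  rw [ip_eq_half_integral_of_add_comp_one_sub
    (Continuous.intervalIntegrable (by unfold φ₂ ψ₁₀; fun_prop) _ _) hsym,
    integral_const_mul, integral_cos_two_pi_nat_mul hi]
  simp

lemma ip_φ₁₀_ψ₁ (i : ℕ) : ip φ₁₀ (ψ₁ i) = 0 :=
  ip_eq_zero_of_comp_one_sub fun x => by simp only [φ₁₀, ψ₁, sin_two_pi_nat_mul_one_sub]; ring

lemma ip_φ₁_ψ₁₀ (i : ℕ) : ip (φ₁ i) ψ₁₀ = 0 :=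
  ip_eq_zero_of_comp_one_sub fun x => by simp only [φ₁, ψ₁₀, sin_two_pi_nat_mul_one_sub]; ring

lemma ip_φ₁_ψ₂ (i j : ℕ) : ip (φ₁ i) (ψ₂ j) = 0 :=
  ip_eq_zero_of_comp_one_sub fun x => by
    simp only [φ₁, ψ₂, sin_two_pi_nat_mul_one_sub, cos_two_pi_nat_mul_one_sub]; ring

lemma ip_φ₂_ψ₁ (i j : ℕ) : ip (φ₂ i) (ψ₁ j) = 0 :=
  ip_eq_zero_of_comp_one_sub fun x => by
    simp only [φ₂, ψ₁, sin_two_pi_nat_mul_one_sub, cos_two_pi_nat_mul_one_sub]; ring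

theorem biorthogonal_system :
    ip φ₁₀ ψ₁₀ = 1 ∧
    (∀ i j : ℕ, 1 ≤ i → 1 ≤ j → ip (φ₁ i) (ψ₁ j) = if i = j then 1 else 0) ∧
    (∀ i j : ℕ, 1 ≤ i → 1 ≤ j → ip (φ₂ i) (ψ₂ j) = if i = j then 1 else 0) ∧
    (∀ i : ℕ, 1 ≤ i → ip φ₁₀ (ψ₁ i) = 0) ∧
    (∀ i : ℕ, 1 ≤ i → ip φ₁₀ (ψ₂ i) = 0) ∧
    (∀ i : ℕ, 1 ≤ i → ip (φ₁ i) ψ₁₀ = 0) ∧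
    (∀ i : ℕ, 1 ≤ i → ip (φ₂ i) ψ₁₀ = 0) ∧
    (∀ i j : ℕ, 1 ≤ i → 1 ≤ j → ip (φ₁ i) (ψ₂ j) = 0) ∧
    (∀ i j : ℕ, 1 ≤ i → 1 ≤ j → ip (φ₂ i) (ψ₁ j) = 0) :=
  ⟨ip_φ₁₀_ψ₁₀, fun _ _ hi _ => ip_φ₁_ψ₁ (by omega), fun _ _ hi _ => ip_φ₂_ψ₂ (by omega),
    fun i _ => ip_φ₁₀_ψ₁ i, fun _ hi => ip_φ₁₀_ψ₂ (by omega), fun i _ => ip_φ₁_ψ₁₀ i,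
    fun _ hi => ip_φ₂_ψ₁₀ (by omega), fun i j _ _ => ip_φ₁_ψ₂ i j, fun i j _ _ => ip_φ₂_ψ₁ i j⟩
end

section
/- For α, β > 0, ρ > 0 and any a ∈ ℝ, the generalized Mittag-Leffler function satisfies the antiderivative identity: the derivative in τ of −(t−τ)^β E^ρ_{α,β+1}(−a(t−τ)^α) equals (t−τ)^{β−1} E^ρ_{α,β}(−a(t−τ)^α), for 0 < τ < t. -/
/-!
Expand `x ^ γ * E^ρ_{α,β}(c x ^ α) = ∑ₖ cₖ(β) cᵏ x ^ (α k + γ)`, where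
`cₖ(β) = Γ(ρ + k) / (Γ(ρ) Γ(α k + β) k!)`. Termwise, the identity is
`d/dx x ^ (α k + β) = (α k + β) x ^ (α k + β - 1)` together with
`Γ(α k + β + 1) = (α k + β) Γ(α k + β)`, i.e. `cₖ(β) = (α k + β) cₖ(β + 1)`. Termwise
differentiation on a neighbourhood of `t - τ` is justified by the convergence of `∑ₖ |cₖ(β) z ᵏ|`
for every `z`, which follows from the ratio test: log-convexity of `Γ` gives
`Γ(x + α) ≥ (x - 1) ^ α Γ(x)` for `x > 1`, so the ratio of consecutive terms tends to `0`.
-/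

open Real

/-- The generalized (three-parameter, Prabhakar) Mittag-Leffler function. -/
noncomputable def mlE3 (α β ρ z : ℝ) : ℝ :=
  ∑' k : ℕ, Real.Gamma (ρ + k) * z ^ k / (Real.Gamma ρ * Real.Gamma (α * k + β) * (Nat.factorial k))

open Filter Set
open scoped Nat

namespace Real

theorem sub_one_rpow_mul_Gamma_le_Gamma_add {x α : ℝ} (hx : 1 < x) (hα : 0 < α) :
    (x - 1) ^ α * Gamma x ≤ Gamma (x + α) := by
  have hx1 : 0 < x - 1 := sub_pos.2 hx
  have hrec : Gamma x = (x - 1) * Gamma (x - 1) := by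
    simpa using Gamma_add_one hx1.ne'
  have hlog : log (Gamma x) = log (x - 1) + log (Gamma (x - 1)) := by
    rw [hrec, log_mul hx1.ne' (Gamma_pos_of_pos hx1).ne']
  have hslope := convexOn_log_Gamma.slope_mono_adjacent (x := x - 1) (y := x) (z := x + α)
    (mem_Ioi.2 hx1) (mem_Ioi.2 (by linarith)) (by linarith) (by linarith)
  simp only [Function.comp_apply, sub_sub_cancel, div_one, add_sub_cancel_left] at hslope
  rw [hlog, add_sub_cancel_right, le_div_iff₀ hα] at hslope
  rw [← log_le_log_iff (by positivity) (Gamma_pos_of_pos (by linarith)),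
    log_mul (by positivity) (Gamma_pos_of_pos (by linarith)).ne', log_rpow hx1, hlog]
  linarith

end Real

noncomputable def mlCoeff (α β ρ : ℝ) (k : ℕ) : ℝ :=
  Gamma (ρ + k) / (Gamma ρ * Gamma (α * k + β) * k !)

theorem mlE3_eq_tsum (α β ρ z : ℝ) : mlE3 α β ρ z = ∑' k, mlCoeff α β ρ k * z ^ k := by
  simp only [mlE3, mlCoeff]
  congr 1
  ext k
  ring

section
variable {α β ρ : ℝ}

theorem mlCoeff_eq_mul_mlCoeff_add_one {k : ℕ} (hk : α * k + β ≠ 0) :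
    mlCoeff α β ρ k = (α * k + β) * mlCoeff α (β + 1) ρ k := by
  rw [mlCoeff, mlCoeff, ← add_assoc, Gamma_add_one hk, show Gamma ρ * ((α * k + β) * Gamma (α * k + β)) * k ! =
      (α * k + β) * (Gamma ρ * Gamma (α * k + β) * k !) by ring,
    ← mul_div_assoc, mul_div_mul_left _ _ hk]

theorem mlCoeff_nonneg (hα : 0 ≤ α) (hβ : 0 < β) (hρ : 0 < ρ) (k : ℕ) : 0 ≤ mlCoeff α β ρ k := by
  have := Gamma_pos_of_pos (by positivity : 0 < ρ + k)
  have := Gamma_pos_of_pos hρ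
  have := Gamma_pos_of_pos (by positivity : 0 < α * k + β)
  unfold mlCoeff
  positivity

theorem mlCoeff_succ {k : ℕ} (hρk : ρ + k ≠ 0) (hΓ : Gamma (α * k + β) ≠ 0) :
    mlCoeff α β ρ (k + 1) =
      mlCoeff α β ρ k * ((ρ + k) / (k + 1)) * (Gamma (α * k + β) / Gamma (α * k + β + α)) := by
  simp only [mlCoeff, Nat.factorial_succ, Nat.cast_mul, Nat.cast_succ]
  rw [show ρ + (k + 1) = ρ + k + 1 by ring, show α * (k + 1) + β = α * k + β + α by ring,
    Gamma_add_one hρk]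
  generalize α * k + β = x at hΓ ⊢
  field_simp

theorem summable_norm_mlCoeff_mul_pow (hα : 0 < α) (hβ : 0 < β) (hρ : 0 < ρ) (z : ℝ) :
    Summable fun k => ‖mlCoeff α β ρ k * z ^ k‖ := by
  have hx : Tendsto (fun k : ℕ => α * k + (β - 1)) atTop atTop :=
    tendsto_atTop_add_const_right _ _ (tendsto_natCast_atTop_atTop.const_mul_atTop hα)
  have hlarge : ∀ᶠ k : ℕ in atTop, 2 * (ρ + 1) * |z| ≤ (α * k + (β - 1)) ^ α :=
    ((tendsto_rpow_atTop hα).comp hx).eventually_ge_atTop _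
  refine summable_of_ratio_norm_eventually_le (by norm_num : (1 / 2 : ℝ) < 1) ?_
  filter_upwards [hx.eventually_gt_atTop 0, hlarge] with k hk hkz
  rw [← add_sub_assoc] at hk hkz
  have hΓ := Gamma_pos_of_pos (by linarith : 0 < α * k + β)
  have hΓα := Gamma_pos_of_pos (by linarith : 0 < α * k + β + α)
  have hq : (ρ + k) / (k + 1) ≤ ρ + 1 := by
    rw [div_le_iff₀ (by positivity)]
    nlinarith [(Nat.cast_nonneg k : (0 : ℝ) ≤ k)]
  have hr : Gamma (α * k + β) / Gamma (α * k + β + α) * (α * k + β - 1) ^ α ≤ 1 := by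
    rw [div_mul_eq_mul_div, div_le_one hΓα, mul_comm]
    exact sub_one_rpow_mul_Gamma_le_Gamma_add (by linarith) hα
  have hr0 : 0 ≤ Gamma (α * k + β) / Gamma (α * k + β + α) := div_nonneg hΓ.le hΓα.le
  have hratio : (ρ + k) / (k + 1) * (Gamma (α * k + β) / Gamma (α * k + β + α)) * |z| ≤ 1 / 2 :=
    calc (ρ + k) / (k + 1) * (Gamma (α * k + β) / Gamma (α * k + β + α)) * |z|
        ≤ (ρ + 1) * (Gamma (α * k + β) / Gamma (α * k + β + α)) * |z| := by gcongr
      _ = 2 * (ρ + 1) * |z| * (Gamma (α * k + β) / Gamma (α * k + β + α)) / 2 := by ring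
      _ ≤ (α * k + β - 1) ^ α * (Gamma (α * k + β) / Gamma (α * k + β + α)) / 2 := by gcongr
      _ ≤ 1 / 2 := by linarith
  have hc := mlCoeff_nonneg hα.le hβ hρ k
  rw [norm_norm, norm_norm, norm_mul, norm_mul, norm_of_nonneg hc,
    norm_of_nonneg (mlCoeff_nonneg hα.le hβ hρ (k + 1)), mlCoeff_succ (by positivity) hΓ.ne',
    norm_pow, norm_pow, pow_succ]
  calc mlCoeff α β ρ k * ((ρ + k) / (k + 1)) * (Gamma (α * k + β) / Gamma (α * k + β + α)) *
        (‖z‖ ^ k * ‖z‖)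
      = mlCoeff α β ρ k * ‖z‖ ^ k *
        ((ρ + k) / (k + 1) * (Gamma (α * k + β) / Gamma (α * k + β + α)) * |z|) := by
        rw [norm_eq_abs]; ring
    _ ≤ mlCoeff α β ρ k * ‖z‖ ^ k * (1 / 2) := by gcongr
    _ = 1 / 2 * (mlCoeff α β ρ k * ‖z‖ ^ k) := by ring

theorem hasSum_rpow_mul_mlE3 (hα : 0 < α) (hβ : 0 < β) (hρ : 0 < ρ) (c γ : ℝ) {x : ℝ}
    (hx : 0 < x) :
    HasSum (fun k : ℕ => mlCoeff α β ρ k * c ^ k * x ^ (α * k + γ))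
      (x ^ γ * mlE3 α β ρ (c * x ^ α)) := by
  rw [mlE3_eq_tsum]
  refine ((summable_norm_mlCoeff_mul_pow hα hβ hρ (c * x ^ α)).of_norm.hasSum.mul_left
    (x ^ γ)).congr_fun fun k => ?_
  rw [rpow_add hx, rpow_mul_natCast hx.le, mul_pow]
  ring

theorem hasDerivAt_rpow_mul_mlE3 (hα : 0 < α) (hβ : 0 < β) (hρ : 0 < ρ) (c : ℝ) {s : ℝ}
    (hs : 0 < s) :
    HasDerivAt (fun x => x ^ β * mlE3 α (β + 1) ρ (c * x ^ α))
      (s ^ (β - 1) * mlE3 α β ρ (c * s ^ α)) s := by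
  have hU : ∀ x ∈ Icc (s / 2) (2 * s), 0 < x := fun x hx => by linarith [hx.1]
  have hsU : s ∈ Ioo (s / 2) (2 * s) := ⟨by linarith, by linarith⟩
  obtain ⟨C, hC⟩ := isCompact_Icc.exists_bound_of_continuousOn fun x hx =>
    (continuousAt_rpow_const x (β - 1) (Or.inl (hU x hx).ne')).continuousWithinAt
  have hterm : ∀ (k : ℕ), ∀ x ∈ Ioo (s / 2) (2 * s),
      HasDerivAt (fun y => mlCoeff α (β + 1) ρ k * c ^ k * y ^ (α * k + β))
        (mlCoeff α β ρ k * c ^ k * x ^ (α * k + (β - 1))) x := by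
    intro k x hx
    refine ((hasDerivAt_rpow_const (Or.inl (hU x (Ioo_subset_Icc_self hx)).ne')).const_mul
      (mlCoeff α (β + 1) ρ k * c ^ k)).congr_deriv ?_
    rw [mlCoeff_eq_mul_mlCoeff_add_one (β := β) (by positivity), add_sub_assoc]
    ring
  have hbound : ∀ (k : ℕ), ∀ x ∈ Ioo (s / 2) (2 * s),
      ‖mlCoeff α β ρ k * c ^ k * x ^ (α * k + (β - 1))‖ ≤
        C * ‖mlCoeff α β ρ k * (c * (2 * s) ^ α) ^ k‖ := by
    intro k x hx
    have hx0 := hU x (Ioo_subset_Icc_self hx)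
    have hxα : ‖x ^ α‖ ≤ ‖(2 * s) ^ α‖ := by
      rw [norm_of_nonneg (by positivity), norm_of_nonneg (by positivity)]
      exact rpow_le_rpow hx0.le hx.2.le hα.le
    rw [rpow_add hx0, rpow_mul_natCast hx0.le, mul_pow]
    simp only [norm_mul, norm_pow]
    calc ‖mlCoeff α β ρ k‖ * ‖c‖ ^ k * (‖x ^ α‖ ^ k * ‖x ^ (β - 1)‖)
        ≤ ‖mlCoeff α β ρ k‖ * ‖c‖ ^ k * (‖(2 * s) ^ α‖ ^ k * C) := by
          gcongr
          exact hC x (Ioo_subset_Icc_self hx)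
      _ = C * (‖mlCoeff α β ρ k‖ * (‖c‖ ^ k * ‖(2 * s) ^ α‖ ^ k)) := by ring
  have hseries := hasDerivAt_tsum_of_isPreconnected
    ((summable_norm_mlCoeff_mul_pow hα hβ hρ (c * (2 * s) ^ α)).mul_left C) isOpen_Ioo
    isPreconnected_Ioo hterm hbound hsU
    (hasSum_rpow_mul_mlE3 hα (by linarith) hρ c β hs).summable hsU
  rw [← (hasSum_rpow_mul_mlE3 hα hβ hρ c (β - 1) hs).tsum_eq]
  refine hseries.congr_of_eventuallyEq ?_
  filter_upwards [isOpen_Ioo.mem_nhds hsU] with x hx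
  exact (hasSum_rpow_mul_mlE3 hα (by linarith) hρ c β (hU x (Ioo_subset_Icc_self hx))).tsum_eq.symm

end

theorem mittagLeffler_antiderivative_general (α β ρ a t : ℝ) (hα : 0 < α) (hβ : 0 < β) (hρ : 0 < ρ)
    (τ : ℝ) (hτt : τ < t) :
    HasDerivAt (fun σ : ℝ => -(t - σ) ^ β * mlE3 α (β + 1) ρ (-a * (t - σ) ^ α))
      ((t - τ) ^ (β - 1) * mlE3 α β ρ (-a * (t - τ) ^ α)) τ := by
  have h := (hasDerivAt_rpow_mul_mlE3 hα hβ hρ (-a) (sub_pos.2 hτt)).comp τ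
    ((hasDerivAt_id τ).const_sub t)
  refine (h.neg.congr_deriv (by ring)).congr_of_eventuallyEq (.of_forall fun σ => ?_)
  simp [neg_mul]

theorem mittagLeffler_antiderivative (α β ρ a t : ℝ) (hα : 0 < α) (hβ : 0 < β) (hρ : 0 < ρ)
    (τ : ℝ) (hτ : 0 < τ) (hτt : τ < t) :
    HasDerivAt (fun σ : ℝ => -(t - σ) ^ β * mlE3 α (β + 1) ρ (-a * (t - σ) ^ α))
      ((t - τ) ^ (β - 1) * mlE3 α β ρ (-a * (t - τ) ^ α)) τ :=
  mittagLeffler_antiderivative_general α β ρ a t hα hβ hρ τ hτt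
end

section
/- For 0 < α ≤ 1, λ² > 1 and i ≥ 1 with λᵢ ≠ λ and μ := λᵢ² − λ² + 1 ≠ 0, let w(t) = (λ² − E_α((1−λ²)t^α))/(λ²−1). Then the convolution ∫₀^t w(τ)(t−τ)^{α−1} E_{α,α}(−λᵢ²(t−τ)^α) dτ equals μ^{−1}[ E_α((1−λ²)t^α)/(1−λ²)·(1−λ²) + λ² t^α E_{α,α+1}((1−λ²)t^α) − E_α(−λᵢ² t^α) − λ² t^α E_{α,α+1}(−λᵢ² t^α) ] (i.e., the closed form obtained by partial fractions of the Laplace transforms). -/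
open Real intervalIntegral

/-- The two-parameter Mittag-Leffler function. -/
noncomputable def mlE (α β z : ℝ) : ℝ := ∑' k : ℕ, z ^ k / Real.Gamma (α * k + β)

/-!
Expanding both Mittag-Leffler functions into their power series, the convolution of
`(a τ^α)^j / Γ(αj+1)` with `(t-τ)^(α-1) (b (t-τ)^α)^k / Γ(αk+α)` is a Beta integral and equals
`a^j b^k t^(α(j+k+1)) / Γ(α(j+k+1)+1)`; dominated convergence lets us integrate termwise. Summing
along the antidiagonals `j + k = n` turns `a^j b^k` into `(a^(n+1) - b^(n+1)) / (a - b)`, so for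
`a ≠ b` the convolution is `(E_α(a t^α) - E_α(b t^α)) / (a - b)`: the time-domain form of the
partial fraction decomposition of `1 / ((s^α - a)(s^α - b))`. The function `w` is an affine
combination of `E_α(0 ⬝ t^α) = 1` and `E_α((1 - λ²) t^α)`, so the theorem follows from the cases
`a = 0` and `a = 1 - λ²`, `b = -λᵢ²`, together with `z E_{α,α+1}(z) = E_α(z) - 1`.
-/

open MeasureTheory Set Filter Interval Finset

theorem Real.rpow_sub_one_le_exp_mul_Gamma {s R : ℝ} (hs : 1 ≤ s) (hR : 0 < R) :
    R ^ (s - 1) ≤ exp (R + 1) * Gamma s := by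
  have hsub : Icc R (R + 1) ⊆ Ioi 0 := fun x hx => hR.trans_le hx.1
  have hint : exp (-(R + 1)) * R ^ (s - 1) ≤ Gamma s := by
    calc exp (-(R + 1)) * R ^ (s - 1)
        = ∫ _ in Icc R (R + 1), exp (-(R + 1)) * R ^ (s - 1) := by simp
      _ ≤ ∫ x in Icc R (R + 1), exp (-x) * x ^ (s - 1) := by
        refine setIntegral_mono_on (integrableOn_const (by simp))
          ((GammaIntegral_convergent (by linarith)).mono_set hsub) measurableSet_Icc ?_
        exact fun x hx => mul_le_mul (exp_le_exp.2 (by linarith [hx.2]))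
          (rpow_le_rpow hR.le hx.1 (by linarith)) (by positivity) (exp_pos _).le
      _ ≤ ∫ x in Ioi 0, exp (-x) * x ^ (s - 1) :=
        setIntegral_mono_set (GammaIntegral_convergent (by linarith))
          (ae_restrict_of_forall_mem measurableSet_Ioi fun x (hx : 0 < x) => by positivity)
          hsub.eventuallyLE
      _ = Gamma s := (Gamma_eq_integral (by linarith)).symm
  rw [exp_neg, ← div_eq_inv_mul, div_le_iff₀ (exp_pos _)] at hint
  linarith

theorem summable_norm_pow_div_Gamma {α : ℝ} (hα : 0 < α) (β z : ℝ) :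
    Summable fun k : ℕ => ‖z ^ k / Real.Gamma (α * k + β)‖ := by
  -- with `R ^ α = ρ`, the lower bound on `Γ` dominates the terms by a geometric series of ratio `1/2`
  set ρ := 2 * ‖z‖ + 1
  set R := ρ ^ α⁻¹
  have hρ : 0 < ρ := by positivity
  have hR : 0 < R := by positivity
  refine ((summable_geometric_two).mul_left
    (exp (R + 1) * ρ ^ ((1 - β) / α))).of_norm_bounded_eventually_nat ?_
  filter_upwards [eventually_ge_atTop ⌈(1 - β) / α⌉₊] with k hk
  have hs : 1 ≤ α * k + β := by
    have := (div_le_iff₀ hα).1 (Nat.ceil_le.1 hk)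
    linarith
  have hΓ := Real.rpow_sub_one_le_exp_mul_Gamma hs hR
  have hRpow : R ^ (α * k + β - 1) = ρ ^ k * ρ ^ (-((1 - β) / α)) := by
    rw [← Real.rpow_natCast, ← Real.rpow_add hρ, ← Real.rpow_mul hρ.le]
    congr 1; field_simp; ring
  have hρρ : ρ ^ ((1 - β) / α) * ρ ^ (-((1 - β) / α)) = 1 := by
    rw [← Real.rpow_add hρ, add_neg_cancel, Real.rpow_zero]
  have hΓpos : 0 < Real.Gamma (α * k + β) := Real.Gamma_pos_of_pos (by linarith)
  rw [hRpow] at hΓ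
  rw [norm_norm, norm_div, norm_pow, Real.norm_of_nonneg hΓpos.le, div_le_iff₀ hΓpos]
  calc ‖z‖ ^ k ≤ (ρ / 2) ^ k := pow_le_pow_left₀ (norm_nonneg z) (by linarith) k
    _ = ρ ^ ((1 - β) / α) * (1 / 2) ^ k * (ρ ^ k * ρ ^ (-((1 - β) / α))) := by
      rw [div_eq_mul_one_div ρ, mul_pow]
      linear_combination (ρ ^ k * (1 / 2) ^ k) * hρρ.symm
    _ ≤ ρ ^ ((1 - β) / α) * (1 / 2) ^ k * (exp (R + 1) * Real.Gamma (α * k + β)) := by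
      gcongr
    _ = _ := by ring

theorem integral_rpow_mul_rpow_sub {p q t : ℝ} (hp : 0 < p) (hq : 0 < q) (ht : 0 < t) :
    ∫ τ in (0 : ℝ)..t, τ ^ (p - 1) * (t - τ) ^ (q - 1) =
      Real.Gamma p * Real.Gamma q / Real.Gamma (p + q) * t ^ (p + q - 1) := by
  apply Complex.ofReal_injective
  have hcast : ((∫ τ in (0 : ℝ)..t, τ ^ (p - 1) * (t - τ) ^ (q - 1) : ℝ) : ℂ) =
      ∫ τ in (0 : ℝ)..t, (τ : ℂ) ^ ((p : ℂ) - 1) * ((t : ℂ) - τ) ^ ((q : ℂ) - 1) := by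
    rw [← intervalIntegral.integral_ofReal]
    refine intervalIntegral.integral_congr fun τ hτ => ?_
    rw [uIcc_of_le ht.le] at hτ
    push_cast [Complex.ofReal_cpow hτ.1, Complex.ofReal_cpow (sub_nonneg.2 hτ.2)]
    rfl
  rw [hcast, Complex.betaIntegral_scaled _ _ ht,
    Complex.betaIntegral_eq_Gamma_mul_div _ _ (by simpa) (by simpa)]
  push_cast [Complex.ofReal_cpow ht.le, ← Complex.Gamma_ofReal]
  ring

theorem sum_antidiagonal_pow_mul_pow {K : Type*} [Field K] {a b : K} (hab : a ≠ b) (n : ℕ) :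
    ∑ p ∈ antidiagonal n, a ^ p.1 * b ^ p.2 = (a ^ (n + 1) - b ^ (n + 1)) / (a - b) := by
  rw [eq_div_iff (sub_ne_zero.2 hab), Nat.sum_antidiagonal_eq_sum_range_succ_mk, ← geom_sum₂_mul]
  simp

theorem HasSum.of_pow_mul_pow_antidiagonal {K : Type*} [Field K] [TopologicalSpace K]
    [ContinuousAdd K] [RegularSpace K] {a b L : K} (hab : a ≠ b) {c : ℕ → K}
    (h : HasSum (fun p : ℕ × ℕ => a ^ p.1 * b ^ p.2 * c (p.1 + p.2)) L) :
    HasSum (fun n => (a ^ (n + 1) - b ^ (n + 1)) / (a - b) * c n) L := by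
  have hfiber := (HasAntidiagonal.sigmaAntidiagonalEquivProd.hasSum_iff.2 h).sigma
    fun n => hasSum_fintype _
  refine hfiber.congr_fun fun n => ?_
  rw [← sum_antidiagonal_pow_mul_pow hab, Finset.sum_mul, ← Finset.sum_coe_sort]
  refine Fintype.sum_congr _ _ fun p => ?_
  simp [HasAntidiagonal.sigmaAntidiagonalEquivProd, mem_antidiagonal.1 p.2]

section MittagLeffler

variable {α t : ℝ}

theorem hasSum_mlE (hα : 0 < α) (β z : ℝ) :
    HasSum (fun k : ℕ => z ^ k / Real.Gamma (α * k + β)) (mlE α β z) :=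
  (summable_norm_pow_div_Gamma hα β z).of_norm.hasSum

theorem mlE_one_zero : mlE α 1 0 = 1 := by
  rw [mlE, tsum_eq_single 0 (fun k hk => by rw [zero_pow hk, zero_div])]
  simp [Real.Gamma_one]

theorem hasSum_mlE_succ (hα : 0 < α) (z : ℝ) :
    HasSum (fun n : ℕ => z ^ (n + 1) / Real.Gamma (α * ↑(n + 1) + 1)) (mlE α 1 z - 1) := by
  simpa using (hasSum_nat_add_iff' 1).2 (hasSum_mlE hα 1 z)

theorem mul_mlE_add_one (hα : 0 < α) (z : ℝ) : z * mlE α (α + 1) z = mlE α 1 z - 1 := by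
  have hterm : (fun n : ℕ => z * (z ^ n / Real.Gamma (α * n + (α + 1)))) =
      fun n : ℕ => z ^ (n + 1) / Real.Gamma (α * ↑(n + 1) + 1) := by
    ext n
    rw [pow_succ', Nat.cast_succ, mul_add_one, add_assoc, mul_div_assoc]
  exact ((hasSum_mlE hα (α + 1) z).mul_left z).unique (hterm ▸ hasSum_mlE_succ hα z)

theorem continuous_mlE (hα : 0 < α) (β : ℝ) : Continuous (mlE α β) := by
  refine continuous_iff_continuousAt.2 fun x => ?_
  refine (continuousOn_tsum (fun k => (continuous_pow k).continuousOn.div_const _)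
    (summable_norm_pow_div_Gamma hα β (‖x‖ + 1)) fun k z hz => ?_).continuousAt
    (Metric.ball_mem_nhds x one_pos)
  have hzx : ‖z‖ ≤ ‖‖x‖ + 1‖ := by
    rw [Real.norm_of_nonneg (by positivity : (0 : ℝ) ≤ ‖x‖ + 1)]
    linarith [norm_le_norm_add_norm_sub' z x, (mem_ball_iff_norm.1 hz).le]
  rw [norm_div, norm_div, norm_pow, norm_pow]
  gcongr

theorem intervalIntegrable_mlE_conv_mlE (hα : 0 < α) (a b : ℝ) :
    IntervalIntegrable (fun τ => mlE α 1 (a * τ ^ α) *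
      ((t - τ) ^ (α - 1) * mlE α α (b * (t - τ) ^ α))) volume 0 t := by
  have hkernel : IntervalIntegrable (fun τ : ℝ => (t - τ) ^ (α - 1)) volume 0 t := by
    simpa using
      ((intervalIntegrable_rpow' (a := 0) (b := t) (by linarith : -1 < α - 1)).comp_sub_left t).symm
  have hcont : Continuous fun τ : ℝ => mlE α 1 (a * τ ^ α) * mlE α α (b * (t - τ) ^ α) :=
    ((continuous_mlE hα 1).comp (by fun_prop (disch := exact hα.le))).mul
      ((continuous_mlE hα α).comp (by fun_prop (disch := exact hα.le)))
  convert hkernel.continuousOn_mul hcont.continuousOn using 1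
  ext τ
  ring

theorem integral_mlE_term_conv_term (hα : 0 < α) (ht : 0 < t) (a b : ℝ) (j k : ℕ) :
    ∫ τ in (0 : ℝ)..t, (a * τ ^ α) ^ j / Real.Gamma (α * j + 1) *
        ((t - τ) ^ (α - 1) * ((b * (t - τ) ^ α) ^ k / Real.Gamma (α * k + α))) =
      a ^ j * b ^ k * ((t ^ α) ^ (j + k + 1) / Real.Gamma (α * ↑(j + k + 1) + 1)) := by
  have hΓj : Real.Gamma (α * j + 1) ≠ 0 := (Real.Gamma_pos_of_pos (by positivity)).ne'
  have hΓk : Real.Gamma (α * k + α) ≠ 0 := (Real.Gamma_pos_of_pos (by positivity)).ne'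
  have hintegrand : ∀ᵐ τ, τ ∈ Ι 0 t →
      (a * τ ^ α) ^ j / Real.Gamma (α * j + 1) *
        ((t - τ) ^ (α - 1) * ((b * (t - τ) ^ α) ^ k / Real.Gamma (α * k + α))) =
      a ^ j * b ^ k / (Real.Gamma (α * j + 1) * Real.Gamma (α * k + α)) *
        (τ ^ ((α * j + 1) - 1) * (t - τ) ^ ((α * k + α) - 1)) := by
    filter_upwards [Measure.ae_ne volume t] with τ hτt hτ
    rw [uIoc_of_le ht.le] at hτ
    have hτ' : 0 < t - τ := sub_pos.2 (lt_of_le_of_ne hτ.2 hτt)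
    rw [mul_pow, mul_pow, ← Real.rpow_mul_natCast hτ.1.le, ← Real.rpow_mul_natCast hτ'.le,
      show α * k + α - 1 = α - 1 + α * k by ring, Real.rpow_add hτ', add_sub_cancel_right]
    field_simp
  rw [intervalIntegral.integral_congr_ae hintegrand, intervalIntegral.integral_const_mul,
    integral_rpow_mul_rpow_sub (by positivity) (by positivity) ht,
    show α * j + 1 + (α * k + α) - 1 = α * ↑(j + k + 1) by push_cast; ring,
    show α * j + 1 + (α * k + α) = α * ↑(j + k + 1) + 1 by push_cast; ring,
    Real.rpow_mul_natCast ht.le]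
  field_simp

theorem hasSum_mlE_mul_mlE (hα : 0 < α) (β γ x c y : ℝ) :
    HasSum (fun p : ℕ × ℕ => x ^ p.1 / Real.Gamma (α * p.1 + β) *
        (c * (y ^ p.2 / Real.Gamma (α * p.2 + γ))))
      (mlE α β x * (c * mlE α γ y)) := by
  have hc : Summable fun k : ℕ => ‖c * (y ^ k / Real.Gamma (α * k + γ))‖ := by
    simpa only [norm_mul] using (summable_norm_pow_div_Gamma hα γ y).mul_left ‖c‖
  exact HasSum.mul (f := fun k : ℕ => x ^ k / Real.Gamma (α * k + β))
    (g := fun k : ℕ => c * (y ^ k / Real.Gamma (α * k + γ)))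
    (hasSum_mlE hα β x) ((hasSum_mlE hα γ y).mul_left c)
    (summable_mul_of_summable_norm (R := ℝ) (summable_norm_pow_div_Gamma hα β x) hc)

theorem hasSum_integral_mlE_conv_mlE (hα : 0 < α) (ht : 0 ≤ t) (a b : ℝ) :
    HasSum (fun p : ℕ × ℕ => ∫ τ in (0 : ℝ)..t, (a * τ ^ α) ^ p.1 / Real.Gamma (α * p.1 + 1) *
        ((t - τ) ^ (α - 1) * ((b * (t - τ) ^ α) ^ p.2 / Real.Gamma (α * p.2 + α))))
      (∫ τ in (0 : ℝ)..t,
        mlE α 1 (a * τ ^ α) * ((t - τ) ^ (α - 1) * mlE α α (b * (t - τ) ^ α))) := by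
  refine intervalIntegral.hasSum_integral_of_dominated_convergence (μ := volume)
    (F := fun (p : ℕ × ℕ) τ => (a * τ ^ α) ^ p.1 / Real.Gamma (α * p.1 + 1) *
        ((t - τ) ^ (α - 1) * ((b * (t - τ) ^ α) ^ p.2 / Real.Gamma (α * p.2 + α))))
    (f := fun τ => mlE α 1 (a * τ ^ α) * ((t - τ) ^ (α - 1) * mlE α α (b * (t - τ) ^ α)))
    (fun p τ => (|a| * τ ^ α) ^ p.1 / Real.Gamma (α * p.1 + 1) *
        ((t - τ) ^ (α - 1) * ((|b| * (t - τ) ^ α) ^ p.2 / Real.Gamma (α * p.2 + α))))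
    (fun p => by fun_prop) (fun p => ae_of_all _ fun τ hτ => ?_)
    (ae_of_all _ fun τ _ => (hasSum_mlE_mul_mlE hα 1 α (|a| * τ ^ α) ((t - τ) ^ (α - 1))
      (|b| * (t - τ) ^ α)).summable) ?_
    (ae_of_all _ fun τ _ =>
      hasSum_mlE_mul_mlE hα 1 α (a * τ ^ α) ((t - τ) ^ (α - 1)) (b * (t - τ) ^ α))
  · rw [uIoc_of_le ht] at hτ
    have hτ0 : 0 ≤ τ ^ α := Real.rpow_nonneg hτ.1.le α
    have hτt : 0 ≤ t - τ := sub_nonneg.2 hτ.2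
    have hΓj := Real.Gamma_pos_of_pos (by positivity : 0 < α * p.1 + 1)
    have hΓk := Real.Gamma_pos_of_pos (by positivity : 0 < α * p.2 + α)
    simp only [norm_mul, norm_div, norm_pow, Real.norm_of_nonneg hτ0, Real.norm_of_nonneg hΓj.le,
      Real.norm_of_nonneg hΓk.le, Real.norm_of_nonneg (Real.rpow_nonneg hτt _), Real.norm_eq_abs]
    exact le_rfl
  · simpa only [fun τ => (hasSum_mlE_mul_mlE hα 1 α (|a| * τ ^ α) ((t - τ) ^ (α - 1))
      (|b| * (t - τ) ^ α)).tsum_eq] using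
      intervalIntegrable_mlE_conv_mlE hα |a| |b|

theorem integral_mlE_conv_mlE (hα : 0 < α) (ht : 0 < t) {a b : ℝ} (hab : a ≠ b) :
    ∫ τ in (0 : ℝ)..t, mlE α 1 (a * τ ^ α) * ((t - τ) ^ (α - 1) * mlE α α (b * (t - τ) ^ α)) =
      (mlE α 1 (a * t ^ α) - mlE α 1 (b * t ^ α)) / (a - b) := by
  have hseries := hasSum_integral_mlE_conv_mlE hα ht.le a b
  simp only [integral_mlE_term_conv_term hα ht] at hseries
  refine (HasSum.of_pow_mul_pow_antidiagonal hab
    (c := fun n => (t ^ α) ^ (n + 1) / Real.Gamma (α * ↑(n + 1) + 1)) hseries).unique ?_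
  have hdiff := ((hasSum_mlE_succ hα (a * t ^ α)).sub (hasSum_mlE_succ hα (b * t ^ α))).div_const
    (a - b)
  rw [sub_sub_sub_cancel_right] at hdiff
  refine hdiff.congr_fun fun n => ?_
  simp only [mul_pow]
  ring

end MittagLeffler

theorem convolution_closed_form_general (α lam : ℝ) (i : ℕ) (hα : 0 < α)
    (hlam : 1 < lam ^ 2) (hi : 1 ≤ i)
    (hμ : ((2 * π * i : ℝ) ^ 2 - lam ^ 2 + 1) ≠ 0) :
    let lami : ℝ := 2 * π * i
    let μ : ℝ := lami ^ 2 - lam ^ 2 + 1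
    let w : ℝ → ℝ := fun t => (lam ^ 2 - mlE α 1 ((1 - lam ^ 2) * t ^ α)) / (lam ^ 2 - 1)
    ∀ t : ℝ, 0 < t →
      ∫ τ in (0:ℝ)..t, w τ * ((t - τ) ^ (α - 1) * mlE α α (-lami ^ 2 * (t - τ) ^ α)) =
        μ⁻¹ * (mlE α 1 ((1 - lam ^ 2) * t ^ α) / (1 - lam ^ 2) * (1 - lam ^ 2)
          + lam ^ 2 * t ^ α * mlE α (α + 1) ((1 - lam ^ 2) * t ^ α)
          - mlE α 1 (-lami ^ 2 * t ^ α)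
          - lam ^ 2 * t ^ α * mlE α (α + 1) (-lami ^ 2 * t ^ α)) := by
  intro lami μ w t ht
  have hlami : lami ≠ 0 := mul_ne_zero (by positivity) (Nat.cast_ne_zero.2 (by omega))
  have hlam₁ : lam ^ 2 - 1 ≠ 0 := by linarith
  have hlam₁' : 1 - lam ^ 2 ≠ 0 := by linarith
  have hab : 1 - lam ^ 2 ≠ -lami ^ 2 := fun h => hμ (by linear_combination h)
  have hsplit : (fun τ => w τ * ((t - τ) ^ (α - 1) * mlE α α (-lami ^ 2 * (t - τ) ^ α))) =
      fun τ => lam ^ 2 / (lam ^ 2 - 1) *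
          (mlE α 1 (0 * τ ^ α) * ((t - τ) ^ (α - 1) * mlE α α (-lami ^ 2 * (t - τ) ^ α))) -
        1 / (lam ^ 2 - 1) * (mlE α 1 ((1 - lam ^ 2) * τ ^ α) *
          ((t - τ) ^ (α - 1) * mlE α α (-lami ^ 2 * (t - τ) ^ α))) := by
    ext τ
    simp only [w, zero_mul, mlE_one_zero]
    field_simp
  rw [hsplit, integral_sub ((intervalIntegrable_mlE_conv_mlE hα _ _).const_mul _)
      ((intervalIntegrable_mlE_conv_mlE hα _ _).const_mul _),
    intervalIntegral.integral_const_mul, intervalIntegral.integral_const_mul,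
    integral_mlE_conv_mlE hα ht (by simpa using hlami), integral_mlE_conv_mlE hα ht hab,
    zero_mul, mlE_one_zero,
    sub_eq_iff_eq_add.1 (mul_mlE_add_one hα ((1 - lam ^ 2) * t ^ α)).symm,
    sub_eq_iff_eq_add.1 (mul_mlE_add_one hα (-lami ^ 2 * t ^ α)).symm,
    show μ = 1 - lam ^ 2 - -lami ^ 2 by ring]
  have hμ' := sub_ne_zero.2 hab
  field_simp
  ring

theorem convolution_closed_form (α lam : ℝ) (i : ℕ) (hα : 0 < α) (hα1 : α ≤ 1)
    (hlam : 1 < lam ^ 2) (hi : 1 ≤ i)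
    (hne : (2 * π * i : ℝ) ≠ lam)
    (hμ : ((2 * π * i : ℝ) ^ 2 - lam ^ 2 + 1) ≠ 0) :
    let lami : ℝ := 2 * π * i
    let μ : ℝ := lami ^ 2 - lam ^ 2 + 1
    let w : ℝ → ℝ := fun t => (lam ^ 2 - mlE α 1 ((1 - lam ^ 2) * t ^ α)) / (lam ^ 2 - 1)
    ∀ t : ℝ, 0 < t →
      ∫ τ in (0:ℝ)..t, w τ * ((t - τ) ^ (α - 1) * mlE α α (-lami ^ 2 * (t - τ) ^ α)) =
        μ⁻¹ * (mlE α 1 ((1 - lam ^ 2) * t ^ α) / (1 - lam ^ 2) * (1 - lam ^ 2)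
          + lam ^ 2 * t ^ α * mlE α (α + 1) ((1 - lam ^ 2) * t ^ α)
          - mlE α 1 (-lami ^ 2 * t ^ α)
          - lam ^ 2 * t ^ α * mlE α (α + 1) (-lami ^ 2 * t ^ α)) :=
  convolution_closed_form_general α lam i hα hlam hi hμ
end

section
/- Let H : X → ℝ satisfy |H(t)| ≥ h₀ > 0 for all collocation points t, and suppose the kernel satisfies |E(t,τ)| ≤ C(t−τ)^{α−1} with 0 < α ≤ 1. Then there exists k_α > 0 such that whenever the maximum step size Δt < k_α, the 2×2 matrix Hⁿ − Bⁿ of the collocation scheme is invertible for every n, where Hⁿ = diag(H(t_{n,1}), H(t_{n,2})) and Bⁿ has entries a_{n,s}(t_{n,j}) = ∫_{t_{n−1}}^{min(t_{n,j},t_n)} E(t_{n,j},τ) L_{n,s}(τ) dτ, L_{n,s} being the local Lagrange basis polynomials. -/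
/-!
Each entry of `Bⁿ` integrates the weakly singular kernel against a Lagrange basis polynomial over
an interval of length at most `Δtₙ`. On that interval the basis polynomials are bounded by
`ξ₂ / (ξ₂ - ξ₁)`, and integrating `(s - τ) ^ (α - 1)` gives
`|a_{n,s}(t_{n,j})| ≤ C ξ₂ / ((ξ₂ - ξ₁) α) · Δtₙ ^ α`. Once `Δtₙ` is small enough that every row
of `Bⁿ` sums to less than `h₀ ≤ |H(t_{n,j})|`, the matrix `Hⁿ - Bⁿ` is strictly diagonally
dominant, hence invertible by the Levy–Desplanques theorem.
-/

open Real intervalIntegral MeasureTheory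

lemma intervalIntegrable_sub_rpow_sub_one {α : ℝ} (hα : 0 < α) (p q : ℝ) :
    IntervalIntegrable (fun τ => (q - τ) ^ (α - 1)) volume p q := by
  simpa only [sub_sub_cancel] using
    (intervalIntegrable_rpow' (a := q - p) (b := q - q) (by linarith)).comp_sub_left q

lemma integral_sub_rpow_sub_one {α : ℝ} (hα : 0 < α) (p q : ℝ) :
    ∫ τ in p..q, (q - τ) ^ (α - 1) = (q - p) ^ α / α := by
  rw [integral_comp_sub_left (fun x : ℝ => x ^ (α - 1)) q, sub_self,
    integral_rpow (Or.inl (by linarith)), sub_add_cancel, zero_rpow hα.ne', sub_zero]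

lemma abs_integral_mul_le_of_abs_le_rpow {α C Λ p q : ℝ} (hα : 0 < α) (hpq : p ≤ q)
    {E L : ℝ → ℝ} (hE : ∀ u < q, |E u| ≤ C * (q - u) ^ (α - 1))
    (hL : ∀ τ ∈ Set.Ioo p q, |L τ| ≤ Λ) :
    |∫ τ in p..q, E τ * L τ| ≤ C * Λ * (q - p) ^ α / α := by
  have hbound : ∀ᵐ τ, τ ∈ Set.Ioc p q → ‖E τ * L τ‖ ≤ C * Λ * (q - τ) ^ (α - 1) := by
    filter_upwards [Measure.ae_ne volume q] with τ hτq hτ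
    have hτ' : τ ∈ Set.Ioo p q := ⟨hτ.1, lt_of_le_of_ne hτ.2 hτq⟩
    calc ‖E τ * L τ‖ = |E τ| * |L τ| := abs_mul _ _
      _ ≤ C * (q - τ) ^ (α - 1) * Λ :=
        mul_le_mul (hE τ hτ'.2) (hL τ hτ') (abs_nonneg _) ((abs_nonneg _).trans (hE τ hτ'.2))
      _ = C * Λ * (q - τ) ^ (α - 1) := by ring
  calc |∫ τ in p..q, E τ * L τ|
      ≤ ∫ τ in p..q, C * Λ * (q - τ) ^ (α - 1) :=
        norm_integral_le_of_norm_le hpq hbound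
          ((intervalIntegrable_sub_rpow_sub_one hα p q).const_mul _)
    _ = C * Λ * (q - p) ^ α / α := by
        rw [intervalIntegral.integral_const_mul, integral_sub_rpow_sub_one hα, mul_div_assoc]

lemma abs_lagrange_two_le {p x₀ x₁ τ : ℝ} (hp : p ≤ x₀) (hx : x₀ < x₁) (hτ : τ ∈ Set.Icc p x₁)
    (s : Fin 2) :
    |if s = 0 then (x₁ - τ) / (x₁ - x₀) else (τ - x₀) / (x₁ - x₀)| ≤ (x₁ - p) / (x₁ - x₀) := by
  have hx' : 0 < x₁ - x₀ := sub_pos.2 hx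
  split_ifs
  · rw [abs_div, abs_of_pos hx']
    exact div_le_div_of_nonneg_right (abs_sub_le_of_le_of_le (hτ.1.trans hτ.2) le_rfl hτ.1 hτ.2) hx'.le
  · rw [abs_div, abs_of_pos hx']
    exact div_le_div_of_nonneg_right (abs_sub_le_of_le_of_le hτ.1 hτ.2 hp hx.le) hx'.le

lemma det_diagonal_sub_ne_zero {K n : Type*} [NormedField K] [Fintype n] [DecidableEq n]
    (d : n → K) (B : Matrix n n K) (h : ∀ i, ∑ j, ‖B i j‖ < ‖d i‖) :
    (Matrix.diagonal d - B).det ≠ 0 := by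
  refine det_ne_zero_of_sum_row_lt_diag fun i => ?_
  have hoff : ∑ j ∈ Finset.univ.erase i, ‖(Matrix.diagonal d - B) i j‖
      = ∑ j, ‖B i j‖ - ‖B i i‖ := by
    rw [← Finset.sum_erase_add _ _ (Finset.mem_univ i), add_sub_cancel_right]
    refine Finset.sum_congr rfl fun j hj => ?_
    rw [Matrix.sub_apply, Matrix.diagonal_apply_ne _ (Finset.ne_of_mem_erase hj).symm, zero_sub,
      norm_neg]
  calc ∑ j ∈ Finset.univ.erase i, ‖(Matrix.diagonal d - B) i j‖
      = ∑ j, ‖B i j‖ - ‖B i i‖ := hoff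
    _ < ‖d i‖ - ‖B i i‖ := sub_lt_sub_right (h i) _
    _ ≤ ‖(Matrix.diagonal d - B) i i‖ := by
        rw [Matrix.sub_apply, Matrix.diagonal_apply_eq]; exact norm_sub_norm_le _ _

lemma abs_collocation_entry_le {α C ξ₁ ξ₂ ξ p Δ x₀ x₁ q : ℝ} (hα : 0 < α) (hC : 0 ≤ C)
    (hξ₁ : 0 ≤ ξ₁) (hξ₁₂ : ξ₁ < ξ₂) (hξ : 0 < ξ) (hξξ₂ : ξ ≤ ξ₂) (hξ1 : ξ ≤ 1) (hΔ : 0 < Δ)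
    (hx₀ : x₀ = p + ξ₁ * Δ) (hx₁ : x₁ = p + ξ₂ * Δ) (hq : q = p + ξ * Δ)
    {E : ℝ → ℝ} (hE : ∀ u < q, |E u| ≤ C * (q - u) ^ (α - 1)) (s : Fin 2) :
    |∫ τ in p..q, E τ * (if s = 0 then (x₁ - τ) / (x₁ - x₀) else (τ - x₀) / (x₁ - x₀))|
      ≤ C * (ξ₂ / (ξ₂ - ξ₁)) / α * Δ ^ α := by
  have hΛ : (x₁ - p) / (x₁ - x₀) = ξ₂ / (ξ₂ - ξ₁) := by
    rw [hx₀, hx₁, show p + ξ₂ * Δ - (p + ξ₁ * Δ) = (ξ₂ - ξ₁) * Δ by ring, add_sub_cancel_left,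
      mul_div_mul_right _ _ hΔ.ne']
  have hqp : q - p = ξ * Δ := by rw [hq, add_sub_cancel_left]
  have hL : ∀ τ ∈ Set.Ioo p q, |if s = 0 then (x₁ - τ) / (x₁ - x₀) else (τ - x₀) / (x₁ - x₀)|
      ≤ ξ₂ / (ξ₂ - ξ₁) := fun τ hτ => hΛ ▸ abs_lagrange_two_le (by nlinarith) (by nlinarith)
        ⟨hτ.1.le, by nlinarith [hτ.2]⟩ s
  calc _ ≤ C * (ξ₂ / (ξ₂ - ξ₁)) * (q - p) ^ α / α :=
        abs_integral_mul_le_of_abs_le_rpow hα (by nlinarith) hE hL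
    _ ≤ C * (ξ₂ / (ξ₂ - ξ₁)) * Δ ^ α / α := by
        have : 0 ≤ ξ₂ / (ξ₂ - ξ₁) := div_nonneg (by linarith) (by linarith)
        gcongr
        · nlinarith
        · nlinarith
    _ = C * (ξ₂ / (ξ₂ - ξ₁)) / α * Δ ^ α := by ring

theorem collocation_matrix_invertible_general (α C h₀ ξ₁ ξ₂ : ℝ)
    (hα : 0 < α) (hC : 0 < C) (hh₀ : 0 < h₀)
    (hξ₁ : 0 < ξ₁) (hξ₁₂ : ξ₁ < ξ₂) (hξ₂ : ξ₂ < 1) :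
    ∃ kα > 0, ∀ (N : ℕ) (t : ℕ → ℝ) (H : ℝ → ℝ) (E : ℝ → ℝ → ℝ),
      t 0 = 0 → StrictMonoOn t (Set.Iic N) →
      (∀ s u : ℝ, u < s → |E s u| ≤ C * (s - u) ^ (α - 1)) →
      ∀ n : ℕ, 1 ≤ n → n ≤ N →
        -- collocation points of the n-th interval
        let tc : Fin 2 → ℝ :=
          fun j => t (n - 1) + (if j = 0 then ξ₁ else ξ₂) * (t n - t (n - 1))
        -- local Lagrange basis polynomials
        let L : Fin 2 → ℝ → ℝ :=
          fun s τ => if s = 0 then (tc 1 - τ) / (tc 1 - tc 0) else (τ - tc 0) / (tc 1 - tc 0)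
        -- entries of the matrix Bⁿ
        let a : Fin 2 → Fin 2 → ℝ :=
          fun s j => ∫ τ in t (n - 1)..(min (tc j) (t n)), E (tc j) τ * L s τ
        (∀ j : Fin 2, h₀ ≤ |H (tc j)|) →
        t n - t (n - 1) < kα →
        (Matrix.of fun j s : Fin 2 => (if j = s then H (tc j) else 0) - a s j).det ≠ 0 := by
  set K := C * (ξ₂ / (ξ₂ - ξ₁)) / α
  have hK : 0 < K := div_pos (mul_pos hC (div_pos (by linarith) (by linarith))) hα
  refine ⟨(h₀ / (2 * K)) ^ α⁻¹, by positivity, ?_⟩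
  intro N t H E _ hmono hE n hn hnN tc L a hH hstep
  have hΔ : 0 < t n - t (n - 1) :=
    sub_pos.2 (hmono (Set.mem_Iic.2 (by omega)) (Set.mem_Iic.2 hnN) (by omega))
  have hsmall : 2 * (K * (t n - t (n - 1)) ^ α) < h₀ := by
    rw [lt_rpow_inv_iff_of_pos hΔ.le (by positivity) hα, lt_div_iff₀ (by positivity)] at hstep
    linarith
  have hentry : ∀ s j, |a s j| ≤ K * (t n - t (n - 1)) ^ α := by
    intro s j
    set ξ := if j = 0 then ξ₁ else ξ₂ with hξ_def
    obtain ⟨hξ, hξξ₂, hξ1⟩ : 0 < ξ ∧ ξ ≤ ξ₂ ∧ ξ ≤ 1 := by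
      rw [hξ_def]; split_ifs <;> refine ⟨?_, ?_, ?_⟩ <;> linarith
    have hmin : min (tc j) (t n) = tc j := min_eq_left (by simp only [tc]; nlinarith)
    simp only [a, hmin]
    exact abs_collocation_entry_le hα hC.le hξ₁.le hξ₁₂ hξ hξξ₂ hξ1 hΔ (by simp [tc])
      (by simp [tc]) rfl (hE (tc j)) s
  have hdiag : (Matrix.of fun j s : Fin 2 => (if j = s then H (tc j) else 0) - a s j)
      = Matrix.diagonal (fun j => H (tc j)) - Matrix.of fun j s => a s j := by
    ext j s
    simp [Matrix.diagonal_apply]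
  rw [hdiag]
  refine det_diagonal_sub_ne_zero _ _ fun j => ?_
  simp only [Matrix.of_apply, Fin.sum_univ_two, Real.norm_eq_abs]
  linarith [hentry 0 j, hentry 1 j, hH j]

theorem collocation_matrix_invertible (α C h₀ ξ₁ ξ₂ : ℝ)
    (hα : 0 < α) (hα1 : α ≤ 1) (hC : 0 < C) (hh₀ : 0 < h₀)
    (hξ₁ : 0 < ξ₁) (hξ₁₂ : ξ₁ < ξ₂) (hξ₂ : ξ₂ < 1) :
    ∃ kα > 0, ∀ (N : ℕ) (t : ℕ → ℝ) (H : ℝ → ℝ) (E : ℝ → ℝ → ℝ),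
      t 0 = 0 → StrictMonoOn t (Set.Iic N) →
      (∀ s u : ℝ, u < s → |E s u| ≤ C * (s - u) ^ (α - 1)) →
      ∀ n : ℕ, 1 ≤ n → n ≤ N →
        -- collocation points of the n-th interval
        let tc : Fin 2 → ℝ :=
          fun j => t (n - 1) + (if j = 0 then ξ₁ else ξ₂) * (t n - t (n - 1))
        -- local Lagrange basis polynomials
        let L : Fin 2 → ℝ → ℝ :=
          fun s τ => if s = 0 then (tc 1 - τ) / (tc 1 - tc 0) else (τ - tc 0) / (tc 1 - tc 0)
        -- entries of the matrix Bⁿ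
        let a : Fin 2 → Fin 2 → ℝ :=
          fun s j => ∫ τ in t (n - 1)..(min (tc j) (t n)), E (tc j) τ * L s τ
        (∀ j : Fin 2, h₀ ≤ |H (tc j)|) →
        t n - t (n - 1) < kα →
        (Matrix.of fun j s : Fin 2 => (if j = s then H (tc j) else 0) - a s j).det ≠ 0 :=
  collocation_matrix_invertible_general α C h₀ ξ₁ ξ₂ hα hC hh₀ hξ₁ hξ₁₂ hξ₂
end

section
/- (Weakly singular discrete Gronwall inequality) Let 0 < α ≤ 1 and let {e_n}_{n=1}^N be nonnegative numbers satisfying e_n ≤ g_n + C Σ_{i=1}^{n−1} ∫_{t_{i−1}}^{t_i} (t_n − τ)^{α−1} dτ · e_i for a partition 0 = t₀ < t₁ < ⋯ < t_N = T and nonnegative g_n. Then there is a constant C' depending only on C, α, T such that e_n ≤ C' max_{1≤i≤n} g_i for all n. -/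
/-!
Split the weakly singular kernel at distance `δ` before the current node `t n`. Away from `t n` the
kernel is at most `δ ^ (α - 1)`, which leaves an ordinary Gronwall sum with rate
`L = 2 * C * δ ^ (α - 1)`; near `t n` its total mass is at most `δ ^ α / α`, and for
`C * δ ^ α / α = 1 / 2` this part is absorbed by half of any bound on the earlier `e i`. The
resulting recursion `e n ≤ G + L / 2 * ∑ (t i - t (i - 1)) * e i + (max of earlier e) / 2` is
solved by `e n ≤ 2 * G * exp (L * t (n - 1))`, since
`L * h * exp (L * s) ≤ exp (L * (s + h)) - exp (L * s)`.
-/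

open Real intervalIntegral Finset

lemma sum_Icc_sub_pred {M : Type*} [AddCommGroup M] (f : ℕ → M) (m : ℕ) :
    ∑ i ∈ Icc 1 m, (f i - f (i - 1)) = f m - f 0 := by
  induction m with
  | zero => simp
  | succ k ih =>
    rw [sum_Icc_succ_top (by omega), ih, Nat.add_sub_cancel]
    abel

lemma rpow_sub_rpow_le_mul_rpow_sub {α δ x y : ℝ} (hα : 0 ≤ α) (hα1 : α ≤ 1) (hδ : 0 < δ)
    (hδy : δ ≤ y) (hyx : y ≤ x) : x ^ α - y ^ α ≤ α * δ ^ (α - 1) * (x - y) := by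
  have hy : 0 < y := hδ.trans_le hδy
  have hx : x ^ α = y ^ α * (1 + (x - y) / y) ^ α := by
    rw [← mul_rpow hy.le (by positivity)]
    congr 1
    field_simp
    ring
  have bernoulli := rpow_one_add_le_one_add_mul_self
    (show -1 ≤ (x - y) / y by have := div_nonneg (sub_nonneg.2 hyx) hy.le; linarith) hα hα1
  calc x ^ α - y ^ α = y ^ α * ((1 + (x - y) / y) ^ α - 1) := by rw [hx]; ring
    _ ≤ y ^ α * (α * ((x - y) / y)) := by gcongr; linarith
    _ = α * y ^ (α - 1) * (x - y) := by rw [rpow_sub_one hy.ne']; ring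
    _ ≤ α * δ ^ (α - 1) * (x - y) :=
        mul_le_mul_of_nonneg_right
          (mul_le_mul_of_nonneg_left (rpow_le_rpow_of_nonpos hδ hδy (by linarith)) hα)
          (sub_nonneg.2 hyx)

lemma integral_sub_rpow {α : ℝ} (hα : 0 < α) (a b c : ℝ) :
    ∫ τ in a..b, (c - τ) ^ (α - 1) = ((c - a) ^ α - (c - b) ^ α) / α := by
  rw [integral_comp_sub_left (fun x ↦ x ^ (α - 1)) c,
    integral_rpow (Or.inl (by linarith)), sub_add_cancel]

/-- Up to sign, a primitive of the kernel `τ ↦ (c - τ) ^ (α - 1)` cut off to `τ > c - δ`. -/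
noncomputable def nearPrimitive (α c δ x : ℝ) : ℝ := (c - max x (c - δ)) ^ α / α

section nearPrimitive

variable {α c δ : ℝ}

lemma nearPrimitive_nonneg (hα : 0 ≤ α) (hδ : 0 ≤ δ) {x : ℝ} (hx : x ≤ c) :
    0 ≤ nearPrimitive α c δ x := by
  unfold nearPrimitive
  have : 0 ≤ c - max x (c - δ) := sub_nonneg.2 (max_le hx (by linarith))
  positivity

lemma nearPrimitive_le (hα : 0 ≤ α) (hδ : 0 ≤ δ) {x : ℝ} (hx : x ≤ c) :
    nearPrimitive α c δ x ≤ δ ^ α / α := by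
  unfold nearPrimitive
  have : 0 ≤ c - max x (c - δ) := sub_nonneg.2 (max_le hx (by linarith))
  gcongr
  linarith [le_max_right x (c - δ)]

lemma nearPrimitive_antitoneOn (hα : 0 ≤ α) (hδ : 0 ≤ δ) :
    AntitoneOn (nearPrimitive α c δ) (Set.Iic c) := by
  intro x _ y hy hxy
  unfold nearPrimitive
  have : 0 ≤ c - max y (c - δ) := sub_nonneg.2 (max_le hy (by linarith))
  gcongr

lemma integral_sub_rpow_le_add_nearPrimitive (hα : 0 < α) (hα1 : α ≤ 1) (hδ : 0 < δ)
    {a b : ℝ} (hab : a ≤ b) :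
    ∫ τ in a..b, (c - τ) ^ (α - 1) ≤
      δ ^ (α - 1) * (b - a) + (nearPrimitive α c δ a - nearPrimitive α c δ b) := by
  have hδ' : 0 ≤ δ ^ (α - 1) := by positivity
  rw [integral_sub_rpow hα, nearPrimitive, nearPrimitive, ← sub_div]
  rcases le_or_gt b (c - δ) with hb | hb
  · rw [max_eq_right (hab.trans hb), max_eq_right hb, sub_self, zero_div, add_zero,
      div_le_iff₀ hα]
    calc (c - a) ^ α - (c - b) ^ α ≤ α * δ ^ (α - 1) * (c - a - (c - b)) :=
          rpow_sub_rpow_le_mul_rpow_sub hα.le hα1 hδ (by linarith) (by linarith)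
      _ = _ := by ring
  rw [max_eq_left hb.le]
  rcases le_or_gt a (c - δ) with ha | ha
  · rw [max_eq_right ha, sub_sub_cancel, sub_div, sub_div, ← sub_le_iff_le_add,
      sub_sub_sub_cancel_right, ← sub_div, div_le_iff₀ hα]
    calc (c - a) ^ α - δ ^ α ≤ α * δ ^ (α - 1) * (c - a - δ) :=
          rpow_sub_rpow_le_mul_rpow_sub hα.le hα1 hδ le_rfl (by linarith)
      _ ≤ α * δ ^ (α - 1) * (b - a) := mul_le_mul_of_nonneg_left (by linarith) (by positivity)
      _ = _ := by ring
  · rw [max_eq_left ha.le]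
    nlinarith [mul_nonneg hδ' (sub_nonneg.2 hab)]

lemma sum_integral_sub_rpow_mul_le (hα : 0 < α) (hα1 : α ≤ 1) (hδ : 0 < δ) {t e : ℕ → ℝ} {m : ℕ}
    {B : ℝ} (ht : MonotoneOn t (Set.Iic m)) (htc : t m ≤ c) (he : ∀ i ∈ Icc 1 m, 0 ≤ e i)
    (heB : ∀ i ∈ Icc 1 m, e i ≤ B) (hB : 0 ≤ B) :
    ∑ i ∈ Icc 1 m, (∫ τ in t (i - 1)..t i, (c - τ) ^ (α - 1)) * e i ≤
      δ ^ (α - 1) * ∑ i ∈ Icc 1 m, (t i - t (i - 1)) * e i + δ ^ α / α * B := by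
  set Φ := nearPrimitive α c δ
  have htc' : ∀ i ≤ m, t i ≤ c := fun i hi ↦
    (ht (Set.mem_Iic.2 hi) (Set.mem_Iic.2 le_rfl) hi).trans htc
  have htelescope : ∑ i ∈ Icc 1 m, (Φ (t (i - 1)) - Φ (t i)) = Φ (t 0) - Φ (t m) := by
    simpa only [neg_sub_neg] using sum_Icc_sub_pred (fun i ↦ -Φ (t i)) m
  calc _ ≤ ∑ i ∈ Icc 1 m,
        (δ ^ (α - 1) * ((t i - t (i - 1)) * e i) + (Φ (t (i - 1)) - Φ (t i)) * B) := by
        gcongr with i hi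
        obtain ⟨hi1, him⟩ := mem_Icc.1 hi
        have hstep : t (i - 1) ≤ t i :=
          ht (Set.mem_Iic.2 (by omega)) (Set.mem_Iic.2 him) (by omega)
        have hΦ : Φ (t i) ≤ Φ (t (i - 1)) :=
          nearPrimitive_antitoneOn hα.le hδ.le (htc' _ (by omega)) (htc' _ him) hstep
        calc (∫ τ in t (i - 1)..t i, (c - τ) ^ (α - 1)) * e i
            ≤ (δ ^ (α - 1) * (t i - t (i - 1)) + (Φ (t (i - 1)) - Φ (t i))) * e i :=
              mul_le_mul_of_nonneg_right
                (integral_sub_rpow_le_add_nearPrimitive hα hα1 hδ hstep) (he i hi)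
          _ ≤ _ := by nlinarith [he i hi, heB i hi, sub_nonneg.2 hΦ]
    _ = δ ^ (α - 1) * ∑ i ∈ Icc 1 m, (t i - t (i - 1)) * e i + (Φ (t 0) - Φ (t m)) * B := by
        rw [sum_add_distrib, ← mul_sum, ← sum_mul, htelescope]
    _ ≤ _ := by
        have h0 := nearPrimitive_le hα.le hδ.le (htc' 0 (Nat.zero_le m))
        have hm := nearPrimitive_nonneg hα.le hδ.le (htc' m le_rfl)
        gcongr
        linarith

end nearPrimitive

lemma sum_mul_exp_le_exp_sub_one (L : ℝ) (t : ℕ → ℝ) (m : ℕ) :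
    ∑ i ∈ Icc 1 m, L * (t i - t (i - 1)) * exp (L * (t (i - 1) - t 0)) ≤
      exp (L * (t m - t 0)) - 1 := by
  calc _ ≤ ∑ i ∈ Icc 1 m, (exp (L * (t i - t 0)) - exp (L * (t (i - 1) - t 0))) := by
        gcongr with i
        have := add_one_le_exp (L * (t i - t (i - 1)))
        rw [show L * (t i - t 0) = L * (t i - t (i - 1)) + L * (t (i - 1) - t 0) by ring, exp_add]
        nlinarith [exp_pos (L * (t (i - 1) - t 0))]
    _ = _ := by rw [sum_Icc_sub_pred (fun i ↦ exp (L * (t i - t 0))), sub_self, mul_zero, exp_zero]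

lemma le_two_mul_exp_of_le_add_half {N : ℕ} {t e : ℕ → ℝ} {G L : ℝ} (hG : 0 ≤ G) (hL : 0 ≤ L)
    (ht : MonotoneOn t (Set.Iic N))
    (h : ∀ n, 1 ≤ n → n ≤ N → ∀ B, 0 ≤ B → (∀ i ∈ Icc 1 (n - 1), e i ≤ B) →
      e n ≤ G + L / 2 * ∑ i ∈ Icc 1 (n - 1), (t i - t (i - 1)) * e i + B / 2) :
    ∀ n, 1 ≤ n → n ≤ N → e n ≤ 2 * G * exp (L * (t (n - 1) - t 0)) := by
  intro n
  induction n using Nat.strong_induction_on with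
  | _ n ih =>
  intro hn hnN
  have ht' : ∀ i j, i ≤ j → j ≤ N → t i ≤ t j := fun i j hij hjN ↦
    ht (Set.mem_Iic.2 (hij.trans hjN)) (Set.mem_Iic.2 hjN) hij
  have hIH : ∀ i ∈ Icc 1 (n - 1), e i ≤ 2 * G * exp (L * (t (i - 1) - t 0)) := fun i hi ↦
    ih i (by grind) (mem_Icc.1 hi).1 (by grind)
  have hsum : L / 2 * ∑ i ∈ Icc 1 (n - 1), (t i - t (i - 1)) * e i ≤
      G * (exp (L * (t (n - 1) - t 0)) - 1) :=
    calc _ ≤ L / 2 * ∑ i ∈ Icc 1 (n - 1),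
          (t i - t (i - 1)) * (2 * G * exp (L * (t (i - 1) - t 0))) := by
          gcongr with i hi
          · exact sub_nonneg.2 (ht' _ _ (by omega) (by grind))
          · exact hIH i hi
      _ = G * ∑ i ∈ Icc 1 (n - 1), L * (t i - t (i - 1)) * exp (L * (t (i - 1) - t 0)) := by
          rw [mul_sum, mul_sum]
          exact sum_congr rfl fun _ _ ↦ by ring
      _ ≤ _ := by gcongr; exact sum_mul_exp_le_exp_sub_one L t (n - 1)
  have hB : ∀ i ∈ Icc 1 (n - 1), e i ≤ 2 * G * exp (L * (t (n - 1) - t 0)) := fun i hi ↦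
    (hIH i hi).trans (by gcongr; exact ht' _ _ (by grind) (by omega))
  linarith [h n hn hnN _ (by positivity) hB]

theorem discrete_gronwall_weakly_singular_general (α C T : ℝ)
    (hα : 0 < α) (hα1 : α ≤ 1) (hC : 0 < C) :
    ∃ C' > 0, ∀ (N : ℕ) (t : ℕ → ℝ) (e g : ℕ → ℝ),
      1 ≤ N →
      t 0 = 0 → t N = T → StrictMonoOn t (Set.Iic N) →
      (∀ n, 1 ≤ n → n ≤ N → 0 ≤ e n) →
      (∀ n, 1 ≤ n → n ≤ N → 0 ≤ g n) →
      (∀ n, 1 ≤ n → n ≤ N →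
        e n ≤ g n + C * ∑ i ∈ Finset.Icc 1 (n - 1),
          (∫ τ in t (i - 1)..t i, (t n - τ) ^ (α - 1)) * e i) →
      ∀ n, 1 ≤ n → n ≤ N →
        ∀ G : ℝ, (∀ i, 1 ≤ i → i ≤ n → g i ≤ G) → e n ≤ C' * G := by
  obtain ⟨δ, hδ, hCδ⟩ : ∃ δ > 0, C * (δ ^ α / α) = 1 / 2 :=
    ⟨(α / (2 * C)) ^ α⁻¹, by positivity, by
      rw [← rpow_mul (by positivity), inv_mul_cancel₀ hα.ne', rpow_one]; field_simp⟩
  set L := 2 * C * δ ^ (α - 1)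
  refine ⟨2 * exp (L * T), by positivity, ?_⟩
  intro N t e g _ ht0 htN ht he hg hrec n hn hnN G hgG
  have htn : MonotoneOn t (Set.Iic n) := ht.monotoneOn.mono (Set.Iic_subset_Iic.2 hnN)
  have hstep : ∀ m, 1 ≤ m → m ≤ n → ∀ B, 0 ≤ B → (∀ i ∈ Icc 1 (m - 1), e i ≤ B) →
      e m ≤ G + L / 2 * ∑ i ∈ Icc 1 (m - 1), (t i - t (i - 1)) * e i + B / 2 := by
    intro m hm hmn B hB heB
    have hsum := sum_integral_sub_rpow_mul_le hα hα1 hδ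
      (htn.mono (Set.Iic_subset_Iic.2 (by omega)))
      (htn (Set.mem_Iic.2 (by omega)) (Set.mem_Iic.2 hmn) (by omega))
      (fun i hi ↦ he i (mem_Icc.1 hi).1 (by grind)) heB hB
    calc e m ≤ G + C * ∑ i ∈ Icc 1 (m - 1), (∫ τ in t (i - 1)..t i, (t m - τ) ^ (α - 1)) * e i :=
          (hrec m hm (hmn.trans hnN)).trans (by gcongr; exact hgG m hm hmn)
      _ ≤ G + C * (δ ^ (α - 1) * ∑ i ∈ Icc 1 (m - 1), (t i - t (i - 1)) * e i
            + δ ^ α / α * B) := by gcongr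
      _ = _ := by rw [mul_add, ← mul_assoc, mul_comm C, ← mul_assoc, hCδ]; ring
  have hG : 0 ≤ G := (hg n hn hnN).trans (hgG n hn le_rfl)
  calc e n ≤ 2 * G * exp (L * (t (n - 1) - t 0)) :=
        le_two_mul_exp_of_le_add_half hG (by positivity) htn hstep n hn le_rfl
    _ ≤ 2 * exp (L * T) * G := by
        rw [ht0, sub_zero, ← htN, mul_right_comm]
        gcongr
        exact ht.monotoneOn (Set.mem_Iic.2 (by omega)) (Set.mem_Iic.2 le_rfl) (by omega)

/-- Weakly singular discrete Gronwall inequality (Dixon–McKee). -/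
theorem discrete_gronwall_weakly_singular (α C T : ℝ)
    (hα : 0 < α) (hα1 : α ≤ 1) (hC : 0 < C) (hT : 0 < T) :
    ∃ C' > 0, ∀ (N : ℕ) (t : ℕ → ℝ) (e g : ℕ → ℝ),
      1 ≤ N →
      t 0 = 0 → t N = T → StrictMonoOn t (Set.Iic N) →
      (∀ n, 1 ≤ n → n ≤ N → 0 ≤ e n) →
      (∀ n, 1 ≤ n → n ≤ N → 0 ≤ g n) →
      (∀ n, 1 ≤ n → n ≤ N →
        e n ≤ g n + C * ∑ i ∈ Finset.Icc 1 (n - 1),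
          (∫ τ in t (i - 1)..t i, (t n - τ) ^ (α - 1)) * e i) →
      ∀ n, 1 ≤ n → n ≤ N →
        ∀ G : ℝ, (∀ i, 1 ≤ i → i ≤ n → g i ≤ G) → e n ≤ C' * G :=
  discrete_gronwall_weakly_singular_general α C T hα hα1 hC
end
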